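/- If M₁ ≤ M₂ entrywise, M₁ is Metzler, and M₂ is Hurwitz, then M₁ is Hurwitz. -/

import Mathlib

def Metzler {n : ℕ} (M : Matrix (Fin n) (Fin n) ℝ) : Prop :=
  ∀ i j, i ≠ j → 0 ≤ M i j

def Hurwitz {n : ℕ} (M : Matrix (Fin n) (Fin n) ℝ) : Prop :=
  ∀ μ : ℂ, Module.End.HasEigenvalue (Matrix.toLin' (M.map (fun a => (a : ℂ)))) μ → μ.re < 0

open Matrix Filter Topology

attribute [local instance] Matrix.linftyOpNormedRing Matrix.linftyOpNormedAlgebra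
  Matrix.linftyOpNormedSpace

private lemma le_of_forall_pow_mul_le {a b e K : ℝ} (ha : 0 ≤ a) (hb : 0 ≤ b) (he : 0 < e)
    (h : ∀ m : ℕ, a ^ m * e ≤ b ^ m * K) : a ≤ b := by
  by_contra hab
  push_neg at hab
  have ha0 : 0 < a := hb.trans_lt hab
  have hba : b / a < 1 := (div_lt_one ha0).2 hab
  have hba0 : 0 ≤ b / a := div_nonneg hb ha0.le
  have hlim : Tendsto (fun m : ℕ => (b / a) ^ m * K) atTop (𝓝 0) := by
    simpa using (tendsto_pow_atTop_nhds_zero_of_lt_one hba0 hba).mul_const K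
  have key : ∀ m : ℕ, e ≤ (b / a) ^ m * K := by
    intro m
    have h2 : 0 < a ^ m := pow_pos ha0 m
    rw [div_pow, div_mul_eq_mul_div, le_div_iff₀ h2]
    calc e * a ^ m = a ^ m * e := by ring
      _ ≤ b ^ m * K := h m
  exact absurd (ge_of_tendsto hlim (Eventually.of_forall key)) (not_le.mpr he)

private lemma sqrt_sq_add_sq_le {x : ℝ} (y : ℝ) (hx : 0 < x) :
    Real.sqrt (x ^ 2 + y ^ 2) ≤ x + y ^ 2 / (2 * x) := by
  have hd : 2 * x * (y ^ 2 / (2 * x)) = y ^ 2 := by field_simp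
  have h1 : x ^ 2 + y ^ 2 ≤ (x + y ^ 2 / (2 * x)) ^ 2 := by
    nlinarith [sq_nonneg (y ^ 2 / (2 * x))]
  calc Real.sqrt (x ^ 2 + y ^ 2) ≤ Real.sqrt ((x + y ^ 2 / (2 * x)) ^ 2) :=
        Real.sqrt_le_sqrt h1
    _ = x + y ^ 2 / (2 * x) := Real.sqrt_sq (by positivity)

private lemma mem_spectrum_iff_eig {n : ℕ} (A : Matrix (Fin n) (Fin n) ℂ) (μ : ℂ) :
    μ ∈ spectrum ℂ A ↔ Module.End.HasEigenvalue (Matrix.toLin' A) μ := by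
  have h1 : (Matrix.toLinAlgEquiv' A : Module.End ℂ (Fin n → ℂ)) = Matrix.toLin' A :=
    LinearMap.ext fun v => by rw [Matrix.toLinAlgEquiv'_apply, Matrix.toLin'_apply]
  rw [← AlgEquiv.spectrum_eq (Matrix.toLinAlgEquiv' : Matrix (Fin n) (Fin n) ℂ ≃ₐ[ℂ] _) A, h1]
  exact Module.End.hasEigenvalue_iff_mem_spectrum.symm

/-- Core analytic lemma: if an entrywise nonnegative matrix `B` has a nonnegative, nonzero
subinvariant vector `w` with `r • w ≤ B *ᵥ w`, then the spectrum of `B` (over `ℂ`) contains an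
element of norm at least `r`. -/
private lemma exists_spectrum_norm_ge {n : ℕ} (B : Matrix (Fin n) (Fin n) ℝ)
    (hB : ∀ i j, 0 ≤ B i j) (w : Fin n → ℝ) (hw : ∀ i, 0 ≤ w i)
    (i₀ : Fin n) (hwi : 0 < w i₀) (r : ℝ) (hr : 0 ≤ r)
    (hsub : ∀ i, r * w i ≤ (B *ᵥ w) i) :
    ∃ l ∈ spectrum ℂ (B.map (fun a => (a : ℂ))), r ≤ ‖l‖ := by
  haveI : Nonempty (Fin n) := ⟨i₀⟩
  have hmv : ∀ (C : Matrix (Fin n) (Fin n) ℝ) (x : Fin n → ℝ) (i : Fin n),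
      (C *ᵥ x) i = ∑ j, C i j * x j := fun C x i => rfl
  have hpow : ∀ k i j, 0 ≤ (B ^ k) i j := by
    intro k
    induction k with
    | zero =>
      intro i j
      by_cases hij : i = j <;> simp [pow_zero, Matrix.one_apply, hij]
    | succ k ih =>
      intro i j
      rw [pow_succ, Matrix.mul_apply]
      exact Finset.sum_nonneg fun l _ => mul_nonneg (ih i l) (hB l j)
  have hiter : ∀ k i, r ^ k * w i ≤ ((B ^ k) *ᵥ w) i := by
    intro k
    induction k with
    | zero => intro i; simp [pow_zero, Matrix.one_mulVec]
    | succ k ih =>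
      intro i
      have h1 : ((B ^ (k + 1)) *ᵥ w) i = ((B ^ k) *ᵥ (B *ᵥ w)) i := by
        rw [Matrix.mulVec_mulVec, ← pow_succ]
      rw [h1]
      calc r ^ (k + 1) * w i = r * (r ^ k * w i) := by ring
        _ ≤ r * ((B ^ k *ᵥ w) i) := mul_le_mul_of_nonneg_left (ih i) hr
        _ = ∑ j, (B ^ k) i j * (r * w j) := by
            rw [hmv, Finset.mul_sum]
            exact Finset.sum_congr rfl fun j _ => by ring
        _ ≤ ∑ j, (B ^ k) i j * (B *ᵥ w) j := Finset.sum_le_sum fun j _ =>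
            mul_le_mul_of_nonneg_left (hsub j) (hpow k i j)
        _ = ((B ^ k) *ᵥ (B *ᵥ w)) i := (hmv _ _ _).symm
  have hnormb : ∀ k, r ^ k ≤ ‖B ^ k‖ := by
    intro k
    refine le_of_forall_pow_mul_le (K := ‖w‖) (pow_nonneg hr k) (norm_nonneg _) hwi fun m => ?_
    have h1 : (r ^ k) ^ m * w i₀ ≤ ((B ^ (k * m)) *ᵥ w) i₀ := by
      rw [← pow_mul]; exact hiter (k * m) i₀
    have h2 : ((B ^ (k * m)) *ᵥ w) i₀ ≤ ‖(B ^ (k * m)) *ᵥ w‖ :=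
      le_trans (le_abs_self _) (by rw [← Real.norm_eq_abs]; exact norm_le_pi_norm _ i₀)
    have h3 : ‖(B ^ (k * m)) *ᵥ w‖ ≤ ‖B ^ (k * m)‖ * ‖w‖ := Matrix.linfty_opNorm_mulVec _ _
    have h4 : ‖B ^ (k * m)‖ ≤ ‖B ^ k‖ ^ m := by
      rw [pow_mul]; exact norm_pow_le _ m
    calc (r ^ k) ^ m * w i₀ ≤ ‖(B ^ (k * m)) *ᵥ w‖ := h1.trans h2
      _ ≤ ‖B ^ (k * m)‖ * ‖w‖ := h3
      _ ≤ ‖B ^ k‖ ^ m * ‖w‖ := mul_le_mul_of_nonneg_right h4 (norm_nonneg _)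
  set Bc := B.map (fun a => (a : ℂ)) with hBc
  have h0 : B.map (fun a => (a : ℂ)) = Complex.ofRealHom.mapMatrix B := by
    rw [RingHom.mapMatrix_apply]; rfl
  have hmap : ∀ k, Bc ^ k = (B ^ k).map (fun a => (a : ℂ)) := by
    intro k
    rw [hBc, h0, ← map_pow, RingHom.mapMatrix_apply]; rfl
  have hnorm_eq : ∀ k, ‖Bc ^ k‖ = ‖B ^ k‖ := by
    intro k
    rw [hmap k, ← coe_nnnorm, ← coe_nnnorm]
    congr 1
    simp [Matrix.linfty_opNNNorm_def, Matrix.map_apply]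
  haveI : CompleteSpace (Matrix (Fin n) (Fin n) ℂ) := FiniteDimensional.complete ℂ _
  have hgel := spectrum.pow_norm_pow_one_div_tendsto_nhds_spectralRadius Bc
  have hle : ENNReal.ofReal r ≤ spectralRadius ℂ Bc := by
    refine ge_of_tendsto hgel ?_
    filter_upwards [eventually_ge_atTop 1] with k hk
    apply ENNReal.ofReal_le_ofReal
    have hk0 : (k : ℝ) ≠ 0 := Nat.cast_ne_zero.mpr (by omega)
    calc r = (r ^ k) ^ (1 / (k : ℝ)) := by
          rw [← Real.rpow_natCast r k, ← Real.rpow_mul hr, mul_one_div, div_self hk0,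
            Real.rpow_one]
      _ ≤ ‖Bc ^ k‖ ^ (1 / (k : ℝ)) := by
          apply Real.rpow_le_rpow (pow_nonneg hr k) _ (by positivity)
          rw [hnorm_eq]; exact hnormb k
  have hne : (spectrum ℂ Bc).Nonempty :=
    spectrum.nonempty_of_isAlgClosed_of_finiteDimensional ℂ Bc
  obtain ⟨l, hl, hlr⟩ := spectrum.exists_nnnorm_eq_spectralRadius_of_nonempty hne
  refine ⟨l, hl, ?_⟩
  rw [← hlr, ← enorm_eq_nnnorm, ← ofReal_norm] at hle
  exact (ENNReal.ofReal_le_ofReal_iff (norm_nonneg l)).mp hle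

theorem hurwitz_of_le_metzler {n : ℕ} (M₁ M₂ : Matrix (Fin n) (Fin n) ℝ)
    (hle : ∀ i j, M₁ i j ≤ M₂ i j) (hMet : Metzler M₁) (hHur : Hurwitz M₂) :
    Hurwitz M₁ := by
  intro μ hμ
  obtain ⟨v, hv⟩ := hμ.exists_hasEigenvector
  have hveq : (M₁.map (fun a => (a : ℂ))) *ᵥ v = μ • v := by
    have h := hv.apply_eq_smul
    rwa [Matrix.toLin'_apply] at h
  have hvne : v ≠ 0 := hv.right
  obtain ⟨i₀, hi₀⟩ := Function.ne_iff.mp hvne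
  haveI : Nonempty (Fin n) := ⟨i₀⟩
  set S := spectrum ℂ (M₂.map (fun a => (a : ℂ))) with hS
  have hSneg : ∀ l ∈ S, l.re < 0 := fun l hl => hHur l ((mem_spectrum_iff_eig _ _).mp hl)
  have hfin : S.Finite := Matrix.finite_spectrum _
  obtain ⟨C₁, hC₁⟩ := (Set.finite_range (fun i => -M₁ i i)).bddAbove
  obtain ⟨C₂, hC₂⟩ := (hfin.image (fun l => -l.re + l.im ^ 2 / (-l.re))).bddAbove
  set c : ℝ := max C₁ C₂ + 1 with hc
  have hcC₁ : ∀ i, -M₁ i i ≤ c := by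
    intro i
    have := hC₁ (Set.mem_range_self i)
    have h2 := le_max_left C₁ C₂
    simp only [hc]; linarith
  have hcC₂ : ∀ l ∈ S, -l.re + l.im ^ 2 / (-l.re) < c := by
    intro l hl
    have := hC₂ (Set.mem_image_of_mem _ hl)
    have h2 := le_max_right C₁ C₂
    simp only [hc]; linarith
  set A₁ : Matrix (Fin n) (Fin n) ℝ := M₁ + c • (1 : Matrix (Fin n) (Fin n) ℝ) with hA₁
  set A₂ : Matrix (Fin n) (Fin n) ℝ := M₂ + c • (1 : Matrix (Fin n) (Fin n) ℝ) with hA₂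
  have hA₁entry : ∀ i j, A₁ i j = M₁ i j + (if i = j then c else 0) := by
    intro i j
    simp [hA₁, Matrix.add_apply, Matrix.smul_apply, Matrix.one_apply, mul_ite, mul_one, mul_zero]
  have hA₂entry : ∀ i j, A₂ i j = M₂ i j + (if i = j then c else 0) := by
    intro i j
    simp [hA₂, Matrix.add_apply, Matrix.smul_apply, Matrix.one_apply, mul_ite, mul_one, mul_zero]
  have hA₁nonneg : ∀ i j, 0 ≤ A₁ i j := by
    intro i j
    rw [hA₁entry]
    split_ifs with hij
    · subst hij; linarith [hcC₁ i]
    · simpa using hMet i j hij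
  have hA₁₂ : ∀ i j, A₁ i j ≤ A₂ i j := by
    intro i j
    rw [hA₁entry, hA₂entry]
    exact add_le_add_left (hle i j) _
  have hA₂nonneg : ∀ i j, 0 ≤ A₂ i j := fun i j => (hA₁nonneg i j).trans (hA₁₂ i j)
  set w : Fin n → ℝ := fun i => ‖v i‖ with hw
  set r : ℝ := ‖μ + (c : ℂ)‖ with hrdef
  have hsub : ∀ i, r * w i ≤ (A₂ *ᵥ w) i := by
    intro i
    have h2 : ∑ j, ((M₁ i j : ℝ) : ℂ) * v j = μ * v i := by
      have h := congrFun hveq i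
      simpa [Matrix.mulVec, dotProduct, Matrix.map_apply, Pi.smul_apply,
        smul_eq_mul] using h
    have heq : ∑ j, ((A₁ i j : ℝ) : ℂ) * v j = (μ + (c : ℂ)) * v i := by
      calc ∑ j, ((A₁ i j : ℝ) : ℂ) * v j
          = ∑ j, (((M₁ i j : ℝ) : ℂ) * v j + (if i = j then (c : ℂ) else 0) * v j) := by
            refine Finset.sum_congr rfl fun j _ => ?_
            rw [hA₁entry]
            split_ifs <;> push_cast [Algebra.algebraMap_self_apply] <;> ring
        _ = (∑ j, ((M₁ i j : ℝ) : ℂ) * v j) + (c : ℂ) * v i := by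
            rw [Finset.sum_add_distrib]
            congr 1
            simp [ite_mul, Finset.sum_ite_eq, Finset.mem_univ]
        _ = μ * v i + (c : ℂ) * v i := by rw [h2]
        _ = (μ + (c : ℂ)) * v i := by ring
    calc r * w i = ‖(μ + (c : ℂ)) * v i‖ := by rw [hrdef, hw, norm_mul]
      _ = ‖∑ j, ((A₁ i j : ℝ) : ℂ) * v j‖ := by rw [heq]
      _ ≤ ∑ j, ‖((A₁ i j : ℝ) : ℂ) * v j‖ := norm_sum_le _ _
      _ = ∑ j, A₁ i j * w j := by
          refine Finset.sum_congr rfl fun j _ => ?_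
          rw [norm_mul, Complex.norm_real, Real.norm_eq_abs, abs_of_nonneg (hA₁nonneg i j)]
      _ ≤ ∑ j, A₂ i j * w j := Finset.sum_le_sum fun j _ =>
          mul_le_mul_of_nonneg_right (hA₁₂ i j) (norm_nonneg _)
      _ = (A₂ *ᵥ w) i := rfl
  obtain ⟨l, hl, hrl⟩ := exists_spectrum_norm_ge A₂ hA₂nonneg w (fun i => norm_nonneg _) i₀
    (by simpa [hw] using norm_pos_iff.mpr (by simpa using hi₀)) r (norm_nonneg _) hsub
  have hA₂c : A₂.map (fun a => (a : ℂ)) =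
      algebraMap ℂ (Matrix (Fin n) (Fin n) ℂ) (c : ℂ) + M₂.map (fun a => (a : ℂ)) := by
    ext i j
    rw [Matrix.map_apply, hA₂entry, Matrix.add_apply, Matrix.algebraMap_matrix_apply,
      Matrix.map_apply]
    split_ifs <;> push_cast [Algebra.algebraMap_self_apply] <;> ring
  rw [hA₂c, ← spectrum.singleton_add_eq] at hl
  rw [Set.mem_add] at hl
  obtain ⟨x, hx, lam, hlam, hxl⟩ := hl
  rw [Set.mem_singleton_iff] at hx
  subst hx
  have hlamS : lam ∈ S := hlam
  have hlneg : lam.re < 0 := hSneg lam hlamS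
  have hd : 0 < c + lam.re := by
    have h1 := hcC₂ lam hlamS
    have h0 : 0 < -lam.re := by linarith
    have h3 : 0 ≤ lam.im ^ 2 / (-lam.re) := div_nonneg (sq_nonneg _) h0.le
    linarith
  have hlnorm : ‖l‖ = Real.sqrt ((c + lam.re) ^ 2 + lam.im ^ 2) := by
    rw [← hxl, Complex.norm_def, Complex.normSq_apply]
    have h1 : ((c : ℂ) + lam).re = c + lam.re := by simp
    have h2 : ((c : ℂ) + lam).im = lam.im := by simp
    rw [h1, h2]
    ring_nf
  have hbound : ‖l‖ ≤ (c + lam.re) + lam.im ^ 2 / (2 * (c + lam.re)) := by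
    rw [hlnorm]
    exact sqrt_sq_add_sq_le _ hd
  have hkey : lam.im ^ 2 / (2 * (c + lam.re)) < -lam.re := by
    have h1 := hcC₂ lam hlamS
    have h0 : 0 < -lam.re := by linarith
    have h2 : lam.im ^ 2 < (c + lam.re) * (-lam.re) := by
      have h3 : lam.im ^ 2 / (-lam.re) < c + lam.re := by linarith
      have h4 := (div_lt_iff₀ h0).mp h3
      nlinarith
    rw [div_lt_iff₀ (by linarith : (0 : ℝ) < 2 * (c + lam.re))]
    nlinarith [mul_nonneg hd.le h0.le]
  have hre : μ.re + c ≤ r := by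
    have h1 : (μ + (c : ℂ)).re ≤ ‖μ + (c : ℂ)‖ := Complex.re_le_norm _
    have h2 : (μ + (c : ℂ)).re = μ.re + c := by simp
    rw [hrdef]
    linarith
  have : μ.re + c ≤ (c + lam.re) + lam.im ^ 2 / (2 * (c + lam.re)) :=
    le_trans hre (le_trans hrl hbound)
  linarith
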